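/- arXiv:1810.10381 — 2 statements merged into one kernel-verified Lean document; each statement's English description precedes it below -/
import Mathlib

section
/- Let (X, 𝒜, μ, T) be an ergodic probability preserving system and (A_l) an asymptotically rare sequence. Define R_l : X → [0,∞]^ℕ₀ by R_l := μ(A_l)·Φ_{A_l}, where Φ_A = (φ_A, φ_A∘T_A, φ_A∘T_A², …). Then (R_l) is asymptotically T-invariant in μ-measure: the product-metric distance d(R_l∘T, R_l) converges to 0 in μ-measure as l → ∞, where the product metric on [0,∞]^ℕ₀ is d(q,r) = Σ_{j≥0} 2^{−(j+1)}|e^{−q^{(j)}} − e^{−r^{(j)}}|. -/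
open MeasureTheory Filter Topology Set

/-! Outside `T⁻¹ A`, the hitting-time process of `T x` agrees with that of `x` except for the
first entry, which drops by one (both orbits enter `A` at the same point `T_A x`); so the two
normalized processes are `μ(A)`-close there, and `T⁻¹ A` itself has measure `μ(A) → 0`. -/

/-- First hitting time of `A` under `T`. -/
noncomputable def hit {X : Type*} (T : X → X) (A : Set X) (x : X) : ℕ :=
  sInf {n : ℕ | 1 ≤ n ∧ T^[n] x ∈ A}

/-- The first entrance map `T_A x := T^{φ_A(x)} x`. -/
noncomputable def ret {X : Type*} (T : X → X) (A : Set X) (x : X) : X :=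
  T^[hit T A x] x

/-- The `j`-th entry `φ_A(T_A^j x)` of the hitting-time process `Φ_A`. -/
noncomputable def hitOrbit {X : Type*} (T : X → X) (A : Set X) (x : X) (j : ℕ) : ℕ :=
  hit T A ((ret T A)^[j] x)

namespace Real

theorem exp_neg_sub_exp_neg_le {s t : ℝ} (hs : 0 ≤ s) (hst : s ≤ t) :
    exp (-s) - exp (-t) ≤ t - s := by
  have hsplit : exp (-t) = exp (-s) * exp (-(t - s)) := by rw [← exp_add]; ring_nf
  have h1 : exp (-s) ≤ 1 := exp_le_one_iff.mpr (by linarith)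
  have h2 : 1 - (t - s) ≤ exp (-(t - s)) := by linarith [add_one_le_exp (-(t - s))]
  have h3 : exp (-(t - s)) ≤ 1 := exp_le_one_iff.mpr (by linarith)
  rw [hsplit]
  nlinarith [exp_pos (-s)]

end Real

section HittingTime

variable {X : Type*} {T : X → X} {A : Set X} {x : X}

theorem hit_spec (h : hit T A x ≠ 0) : 1 ≤ hit T A x ∧ T^[hit T A x] x ∈ A :=
  Nat.sInf_mem (Nat.nonempty_of_pos_sInf (Nat.pos_of_ne_zero h))

theorem hit_le {n : ℕ} (hn : 1 ≤ n) (h : T^[n] x ∈ A) : hit T A x ≤ n :=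
  Nat.sInf_le ⟨hn, h⟩

theorem hit_ne_zero {n : ℕ} (hn : 1 ≤ n) (h : T^[n] x ∈ A) : hit T A x ≠ 0 :=
  Nat.one_le_iff_ne_zero.mp (Nat.sInf_mem (s := {n | 1 ≤ n ∧ T^[n] x ∈ A}) ⟨n, hn, h⟩).1

theorem hit_le_hit_apply_add_one (h : hit T A (T x) ≠ 0) : hit T A x ≤ hit T A (T x) + 1 :=
  hit_le (by omega) (by rw [Function.iterate_succ_apply]; exact (hit_spec h).2)

theorem hit_apply_eq_zero (h : hit T A x = 0) : hit T A (T x) = 0 := by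
  by_contra h'
  exact hit_ne_zero (n := hit T A (T x) + 1) (by omega)
    (by rw [Function.iterate_succ_apply]; exact (hit_spec h').2) h

theorem hit_eq_hit_apply_add_one (hx : T x ∉ A) (h : hit T A x ≠ 0) :
    hit T A x = hit T A (T x) + 1 := by
  obtain ⟨h1, hmem⟩ := hit_spec h
  have h2 : 2 ≤ hit T A x := by
    by_contra! hlt
    rw [show hit T A x = 1 by omega] at hmem
    exact hx hmem
  have hmem' : T^[hit T A x - 1] (T x) ∈ A := by
    rwa [← Function.iterate_succ_apply, Nat.succ_eq_add_one, Nat.sub_add_cancel h1]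
  have hle : hit T A (T x) ≤ hit T A x - 1 := hit_le (by omega) hmem'
  have hge := hit_le_hit_apply_add_one (hit_ne_zero (by omega) hmem')
  omega

theorem ret_apply_of_notMem (hx : T x ∉ A) (h : hit T A x ≠ 0) :
    ret T A (T x) = ret T A x := by
  rw [ret, ret, hit_eq_hit_apply_add_one hx h, Function.iterate_succ_apply]

theorem hitOrbit_eq_zero (h : hit T A x = 0) (j : ℕ) : hitOrbit T A x j = 0 := by
  have hfix : ret T A x = x := by rw [ret, h, Function.iterate_zero_apply]
  rw [hitOrbit, Function.iterate_fixed hfix, h]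

theorem hitOrbit_apply_succ_of_notMem (hx : T x ∉ A) (j : ℕ) :
    hitOrbit T A (T x) (j + 1) = hitOrbit T A x (j + 1) := by
  by_cases h : hit T A x = 0
  · rw [hitOrbit_eq_zero h, hitOrbit_eq_zero (hit_apply_eq_zero h)]
  · rw [hitOrbit, hitOrbit, Function.iterate_succ_apply, Function.iterate_succ_apply,
      ret_apply_of_notMem hx h]

theorem tsum_abs_exp_hitOrbit_apply_sub_le (hx : T x ∉ A) {a : ℝ} (ha : 0 ≤ a) :
    ∑' j : ℕ, (2 : ℝ)⁻¹ ^ (j + 1) *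
      |Real.exp (-(a * (hitOrbit T A (T x) j : ℝ))) - Real.exp (-(a * (hitOrbit T A x j : ℝ)))|
      ≤ a := by
  by_cases h : hit T A x = 0
  · simp only [hitOrbit_eq_zero h, hitOrbit_eq_zero (hit_apply_eq_zero h), sub_self, abs_zero,
      mul_zero, tsum_zero]
    exact ha
  rw [tsum_eq_single 0 fun j hj => by
    obtain ⟨i, rfl⟩ := Nat.exists_eq_succ_of_ne_zero hj
    rw [hitOrbit_apply_succ_of_notMem hx, sub_self, abs_zero, mul_zero]]
  have hexp : |Real.exp (-(a * hit T A (T x))) - Real.exp (-(a * hit T A x))| ≤ a := by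
    rw [hit_eq_hit_apply_add_one hx h, Nat.cast_succ,
      abs_of_nonneg (sub_nonneg.mpr (Real.exp_le_exp.mpr (by nlinarith)))]
    calc _ ≤ a * (hit T A (T x) + 1) - a * hit T A (T x) :=
          Real.exp_neg_sub_exp_neg_le (by positivity) (by nlinarith)
      _ = a := by ring
  calc (2 : ℝ)⁻¹ ^ (0 + 1) * _ ≤ (2 : ℝ)⁻¹ ^ (0 + 1) * a :=
        mul_le_mul_of_nonneg_left hexp (by norm_num)
    _ ≤ a := by linarith

end HittingTime

theorem stmt18_general {X : Type*} [MeasurableSpace X] (μ : Measure X)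
    (T : X → X) (hT : Ergodic T μ)
    (A : ℕ → Set X) (hA : ∀ l, MeasurableSet (A l))
    (hrare : Tendsto (fun l => μ (A l)) atTop (𝓝 0)) :
    ∀ ε > (0 : ℝ), Tendsto (fun l => μ {x |
        ε ≤ ∑' j : ℕ, (2 : ℝ)⁻¹ ^ (j + 1) *
          |Real.exp (-((μ (A l)).toReal * (hitOrbit T (A l) (T x) j : ℝ)))
            - Real.exp (-((μ (A l)).toReal * (hitOrbit T (A l) x j : ℝ)))|})
      atTop (𝓝 0) := by
  intro ε hε
  have hsmall : ∀ᶠ l in atTop, (μ (A l)).toReal < ε :=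
    ((ENNReal.tendsto_toReal ENNReal.zero_ne_top).comp hrare).eventually_lt_const
      (by simpa using hε)
  refine tendsto_of_tendsto_of_tendsto_of_le_of_le' tendsto_const_nhds hrare
    (Eventually.of_forall fun l => zero_le) ?_
  filter_upwards [hsmall] with l hl
  have hsub : {x | ε ≤ ∑' j : ℕ, (2 : ℝ)⁻¹ ^ (j + 1) *
      |Real.exp (-((μ (A l)).toReal * (hitOrbit T (A l) (T x) j : ℝ)))
        - Real.exp (-((μ (A l)).toReal * (hitOrbit T (A l) x j : ℝ)))|} ⊆ T ⁻¹' A l := by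
    intro x hx
    by_contra hTx
    exact hl.not_ge (hx.trans (tsum_abs_exp_hitOrbit_apply_sub_le hTx ENNReal.toReal_nonneg))
  calc μ _ ≤ μ (T ⁻¹' A l) := measure_mono hsub
    _ = μ (A l) := hT.toMeasurePreserving.measure_preimage (hA l).nullMeasurableSet

/-- For an asymptotically rare sequence `(A_l)` in an ergodic probability preserving system,
the normalized hitting-time processes `R_l = μ(A_l)·Φ_{A_l}` are asymptotically `T`-invariant
in `μ`-measure, in the product metric
`d(q,r) = Σ_j 2^{-(j+1)} |e^{-q⁽ʲ⁾} - e^{-r⁽ʲ⁾}|` on `[0,∞]^{ℕ₀}`. -/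
theorem stmt18 {X : Type*} [MeasurableSpace X] (μ : Measure X) [IsProbabilityMeasure μ]
    (T : X → X) (hT : Ergodic T μ)
    (A : ℕ → Set X) (hA : ∀ l, MeasurableSet (A l)) (hpos : ∀ l, 0 < μ (A l))
    (hrare : Tendsto (fun l => μ (A l)) atTop (𝓝 0)) :
    ∀ ε > (0 : ℝ), Tendsto (fun l => μ {x |
        ε ≤ ∑' j : ℕ, (2 : ℝ)⁻¹ ^ (j + 1) *
          |Real.exp (-((μ (A l)).toReal * (hitOrbit T (A l) (T x) j : ℝ)))
            - Real.exp (-((μ (A l)).toReal * (hitOrbit T (A l) x j : ℝ)))|})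
      atTop (𝓝 0) :=
  stmt18_general μ T hT A hA hrare
end

section
/- Let T be a measure-preserving map of a probability space (X, 𝒜, μ), A ∈ 𝒜 of positive measure, and τ : X → ℕ₀ measurable. Then for every point x with φ_A(x) > τ(x), the normalized hitting-time sequences satisfy d(μ(A)·Φ_A(T^{τ(x)}x), μ(A)·Φ_A(x)) ≤ τ(x)·μ(A), where d is the product metric on [0,∞]^ℕ₀ built from d(s,t) = |e^{−s} − e^{−t}|. Consequently, if (A_l) is a sequence of sets, (ν_l) probability measures, and τ_l measurable with μ(A_l)·τ_l → 0 in ν_l-probability and ν_l(τ_l < φ_{A_l}) → 1, then d(μ(A_l)Φ_{A_l}∘T^{τ_l}, μ(A_l)Φ_{A_l}) → 0 in ν_l-probability. -/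
open MeasureTheory Filter Topology Set

/-! Before the first visit to `A`, the points `x` and `T^m x` (`m < φ_A(x)`) have the same first
entrance `T_A x`, so their hitting-time processes differ only in the first coordinate, by `m`.
As `t ↦ e^{-t}` is 1-Lipschitz on `[0, ∞)`, the distance is at most `m·μ(A)/2`. In the sequential
statement, `{d ≥ ε}` lies in `{τ_l ≥ φ_{A_l}} ∪ {μ(A_l)·τ_l ≥ ε}`, whose `ν_l`-measure tends to `0`. -/

open Real

section Measurability

variable {X : Type*} [MeasurableSpace X]

lemma measurable_sInf_setOf_nat {p : ℕ → X → Prop} (hp : ∀ n, Measurable (p n)) :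
    Measurable fun x => sInf {n | p n x} := by
  classical
  -- padded so that `Nat.find` applies; it then returns `0 = sInf ∅` when `p · x` never holds
  let q : X → ℕ → Prop := fun x n => p n x ∨ ∀ k, ¬p k x
  have hq : ∀ x, ∃ n, q x n := fun x => by
    by_cases h : ∃ n, p n x
    · exact h.imp fun _ => Or.inl
    · exact ⟨0, Or.inr (not_exists.1 h)⟩
  have hfind : (fun x => sInf {n | p n x}) = fun x => Nat.find (hq x) := by
    funext x
    by_cases h : ∃ n, p n x
    · rw [Nat.sInf_def (show {n | p n x}.Nonempty from h)]
      exact Nat.find_congr' fun {n} => by simp [q, not_forall_not.2 h]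
    · have hp0 : {n | p n x} = ∅ := eq_empty_of_forall_notMem (not_exists.1 h)
      rw [hp0, Nat.sInf_empty, eq_comm, Nat.find_eq_zero]
      exact Or.inr (not_exists.1 h)
  rw [hfind]
  exact measurable_find hq fun k =>
    ((hp k).or (Measurable.forall fun j => (hp j).not)).setOf

lemma measurable_hit {T : X → X} {A : Set X} (hT : Measurable T) (hA : MeasurableSet A) :
    Measurable (hit T A) :=
  measurable_sInf_setOf_nat fun n => measurable_const.and (hA.mem.comp (hT.iterate n))

end Measurability

section HittingTimeProcess

variable {X : Type*} {T : X → X} {A : Set X} {x : X} {m : ℕ}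

lemma hit_iterate_of_lt (hm : m < hit T A x) : hit T A (T^[m] x) = hit T A x - m := by
  have hmem : hit T A x ∈ {n | 1 ≤ n ∧ T^[n] x ∈ A} :=
    Nat.sInf_mem (Nat.nonempty_of_pos_sInf (m.zero_le.trans_lt hm))
  have hshift : hit T A x - m ∈ {n | 1 ≤ n ∧ T^[n] (T^[m] x) ∈ A} :=
    ⟨by omega, by rw [← Function.iterate_add_apply, Nat.sub_add_cancel hm.le]; exact hmem.2⟩
  have hmem' : hit T A (T^[m] x) ∈ {n | 1 ≤ n ∧ T^[n] (T^[m] x) ∈ A} := Nat.sInf_mem ⟨_, hshift⟩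
  have hle : hit T A (T^[m] x) ≤ hit T A x - m := Nat.sInf_le hshift
  have hge : hit T A x ≤ hit T A (T^[m] x) + m :=
    Nat.sInf_le ⟨Nat.le_add_right_of_le hmem'.1, by rw [Function.iterate_add_apply]; exact hmem'.2⟩
  omega

lemma ret_iterate_of_lt (hm : m < hit T A x) : ret T A (T^[m] x) = ret T A x := by
  rw [ret, ret, hit_iterate_of_lt hm, ← Function.iterate_add_apply, Nat.sub_add_cancel hm.le]

lemma hitOrbit_iterate_succ_of_lt (hm : m < hit T A x) (j : ℕ) :
    hitOrbit T A (T^[m] x) (j + 1) = hitOrbit T A x (j + 1) := by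
  simp only [hitOrbit, Function.iterate_succ_apply, ret_iterate_of_lt hm]

/-- `d(a·Φ_A(y), a·Φ_A(x))` for the product metric on `[0,∞]^ℕ` built from `|e^{-s} - e^{-t}|`. -/
noncomputable def hitProcessDist (a : ℝ) (T : X → X) (A : Set X) (y x : X) : ℝ :=
  ∑' j : ℕ, (2 : ℝ)⁻¹ ^ (j + 1) *
    |exp (-(a * (hitOrbit T A y j : ℝ))) - exp (-(a * (hitOrbit T A x j : ℝ)))|

lemma abs_exp_neg_sub_exp_neg_add_le {s δ : ℝ} (hs : 0 ≤ s) (hδ : 0 ≤ δ) :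
    |exp (-s) - exp (-(s + δ))| ≤ δ := by
  have hδexp : exp (-δ) ≤ 1 := exp_le_one_iff.2 (by linarith)
  rw [abs_of_nonneg (sub_nonneg.2 (exp_le_exp.2 (by linarith)))]
  calc exp (-s) - exp (-(s + δ)) = exp (-s) * (1 - exp (-δ)) := by
        rw [neg_add, exp_add]; ring
    _ ≤ 1 * δ := mul_le_mul (exp_le_one_iff.2 (by linarith))
        (by linarith [one_sub_le_exp_neg δ]) (by linarith) zero_le_one
    _ = δ := one_mul δ

lemma hitProcessDist_iterate_le {a : ℝ} (ha : 0 ≤ a) (hm : m < hit T A x) :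
    hitProcessDist a T A (T^[m] x) x ≤ m * a := by
  have hsum : hitProcessDist a T A (T^[m] x) x =
      2⁻¹ * |exp (-(a * ((hit T A x - m : ℕ) : ℝ))) - exp (-(a * (hit T A x : ℝ)))| := by
    rw [hitProcessDist, tsum_eq_single 0]
    · simp only [hitOrbit, Function.iterate_zero_apply, hit_iterate_of_lt hm, zero_add, pow_one]
    · rintro (_ | j) hj
      · exact absurd rfl hj
      · rw [hitOrbit_iterate_succ_of_lt hm, sub_self, abs_zero, mul_zero]
  have hdiff := abs_exp_neg_sub_exp_neg_add_le (s := a * ((hit T A x - m : ℕ) : ℝ)) (δ := a * m)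
    (by positivity) (by positivity)
  rw [← mul_add, Nat.cast_sub hm.le, sub_add_cancel] at hdiff
  rw [hsum, Nat.cast_sub hm.le]
  linarith [abs_nonneg (exp (-(a * (hit T A x - m : ℝ))) - exp (-(a * (hit T A x : ℝ)))),
    mul_nonneg ha m.cast_nonneg]

end HittingTimeProcess

section ConvergenceInProbability

variable {X ι : Type*} [MeasurableSpace X] {l : Filter ι} {ν : ι → Measure X} {s : ι → Set X}

lemma tendsto_measure_compl_of_tendsto_measure_one [∀ i, IsProbabilityMeasure (ν i)]
    (hs : ∀ i, MeasurableSet (s i)) (h : Tendsto (fun i => ν i (s i)) l (𝓝 1)) :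
    Tendsto (fun i => ν i (s i)ᶜ) l (𝓝 0) := by
  simp only [prob_compl_eq_one_sub (hs _)]
  simpa using ENNReal.Tendsto.sub tendsto_const_nhds h (Or.inl ENNReal.one_ne_top)

lemma tendsto_measure_le_of_le_on {f g : ι → X → ℝ} {ε : ℝ}
    (hfg : ∀ i, ∀ x ∈ s i, f i x ≤ g i x) (hs : Tendsto (fun i => ν i (s i)ᶜ) l (𝓝 0))
    (hg : Tendsto (fun i => ν i {x | ε ≤ g i x}) l (𝓝 0)) :
    Tendsto (fun i => ν i {x | ε ≤ f i x}) l (𝓝 0) := by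
  have hsub : ∀ i, {x | ε ≤ f i x} ⊆ (s i)ᶜ ∪ {x | ε ≤ g i x} := fun i x hx => by
    by_cases hxs : x ∈ s i
    · exact Or.inr ((show ε ≤ f i x from hx).trans (hfg i x hxs))
    · exact Or.inl hxs
  refine tendsto_of_tendsto_of_tendsto_of_le_of_le tendsto_const_nhds (by simpa using hs.add hg)
    (fun _ => zero_le) fun i => ?_
  exact (measure_mono (hsub i)).trans (measure_union_le _ _)

end ConvergenceInProbability

theorem stmt19_general {X : Type*} [MeasurableSpace X] (μ : Measure X)
    (T : X → X) (hT : MeasurePreserving T μ μ) :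
    (∀ (A : Set X) (τ : X → ℕ) (x : X), τ x < hit T A x →
      (∑' j : ℕ, (2 : ℝ)⁻¹ ^ (j + 1) *
          |Real.exp (-((μ A).toReal * (hitOrbit T A (T^[τ x] x) j : ℝ)))
            - Real.exp (-((μ A).toReal * (hitOrbit T A x j : ℝ)))|)
        ≤ (τ x : ℝ) * (μ A).toReal) ∧
    ∀ (A : ℕ → Set X) (ν : ℕ → Measure X) (τ : ℕ → X → ℕ),
      (∀ l, MeasurableSet (A l)) → (∀ l, IsProbabilityMeasure (ν l)) →
      (∀ l, Measurable (τ l)) →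
      (∀ ε > (0 : ℝ),
        Tendsto (fun l => ν l {x | ε ≤ (μ (A l)).toReal * (τ l x : ℝ)}) atTop (𝓝 0)) →
      Tendsto (fun l => ν l {x | τ l x < hit T (A l) x}) atTop (𝓝 1) →
      ∀ ε > (0 : ℝ), Tendsto (fun l => ν l {x |
          ε ≤ ∑' j : ℕ, (2 : ℝ)⁻¹ ^ (j + 1) *
            |Real.exp (-((μ (A l)).toReal * (hitOrbit T (A l) (T^[τ l x] x) j : ℝ)))
              - Real.exp (-((μ (A l)).toReal * (hitOrbit T (A l) x j : ℝ)))|})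
        atTop (𝓝 0) := by
  refine ⟨fun A τ x hx => hitProcessDist_iterate_le ENNReal.toReal_nonneg hx,
    fun A ν τ hA hν hτ hsmall hgood ε hε => ?_⟩
  have hgood_meas : ∀ l, MeasurableSet {x | τ l x < hit T (A l) x} := fun l =>
    measurableSet_lt (hτ l) (measurable_hit hT.measurable (hA l))
  refine tendsto_measure_le_of_le_on (fun l x hx => ?_)
    (tendsto_measure_compl_of_tendsto_measure_one hgood_meas hgood) (hsmall ε hε)
  rw [mul_comm]
  exact hitProcessDist_iterate_le ENNReal.toReal_nonneg hx

/-- Admissible delays for hitting-time processes: whenever `φ_A(x) > τ(x)`, the product-metric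
distance between `μ(A)·Φ_A(T^{τ(x)}x)` and `μ(A)·Φ_A(x)` is at most `τ(x)·μ(A)`.
Consequently, if `μ(A_l)·τ_l → 0` in `ν_l`-probability and `ν_l(τ_l < φ_{A_l}) → 1`, then
`d(μ(A_l)Φ_{A_l}∘T^{τ_l}, μ(A_l)Φ_{A_l}) → 0` in `ν_l`-probability. -/
theorem stmt19 {X : Type*} [MeasurableSpace X] (μ : Measure X) [IsProbabilityMeasure μ]
    (T : X → X) (hT : MeasurePreserving T μ μ) :
    (∀ (A : Set X) (τ : X → ℕ) (x : X), τ x < hit T A x →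
      (∑' j : ℕ, (2 : ℝ)⁻¹ ^ (j + 1) *
          |Real.exp (-((μ A).toReal * (hitOrbit T A (T^[τ x] x) j : ℝ)))
            - Real.exp (-((μ A).toReal * (hitOrbit T A x j : ℝ)))|)
        ≤ (τ x : ℝ) * (μ A).toReal) ∧
    ∀ (A : ℕ → Set X) (ν : ℕ → Measure X) (τ : ℕ → X → ℕ),
      (∀ l, MeasurableSet (A l)) → (∀ l, IsProbabilityMeasure (ν l)) →
      (∀ l, Measurable (τ l)) →
      (∀ ε > (0 : ℝ),
        Tendsto (fun l => ν l {x | ε ≤ (μ (A l)).toReal * (τ l x : ℝ)}) atTop (𝓝 0)) →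
      Tendsto (fun l => ν l {x | τ l x < hit T (A l) x}) atTop (𝓝 1) →
      ∀ ε > (0 : ℝ), Tendsto (fun l => ν l {x |
          ε ≤ ∑' j : ℕ, (2 : ℝ)⁻¹ ^ (j + 1) *
            |Real.exp (-((μ (A l)).toReal * (hitOrbit T (A l) (T^[τ l x] x) j : ℝ)))
              - Real.exp (-((μ (A l)).toReal * (hitOrbit T (A l) x j : ℝ)))|})
        atTop (𝓝 0) :=
  stmt19_general μ T hT
end
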